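/- arXiv:2010.15410 — 5 statements merged into one kernel-verified Lean document; each statement's English description precedes it below -/
import Mathlib

section
/- Let β, γ > 0, and let S₀, E₀, I₀ > 0 with S₀ + E₀ + I₀ ≤ 1. Then the equation x - (γ/β)·ln x = S₀ + E₀ + I₀ - (γ/β)·ln S₀ has exactly one solution x in (0, min(S₀, γ/β)), provided S₀ ≤ γ/β or E₀ + I₀ > 0. -/
/-!
The function `g x = x - c * log x` (with `c = γ / β`) is strictly decreasing on `(0, c]`, attains
its minimum at `c`, and tends to `+∞` as `x → 0⁺`. Hence `g (min S₀ c) ≤ g S₀`, which is strictly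
below the right-hand side `g S₀ + E₀ + I₀`; the intermediate value theorem gives a solution in
`(0, min S₀ c)`, and strict monotonicity makes it unique.
-/

open Filter Set Topology Real

theorem StrictAntiOn.existsUnique_mem_Ioo_eq_of_tendsto_atTop {f : ℝ → ℝ} {a b C : ℝ}
    (hab : a < b) (hf_anti : StrictAntiOn f (Ioc a b)) (hf : ContinuousOn f (Ioc a b))
    (hlim : Tendsto f (𝓝[>] a) atTop) (hb : f b < C) :
    ∃! x, x ∈ Ioo a b ∧ f x = C := by
  obtain ⟨y, hyC, hy⟩ :=
    ((hlim.eventually_gt_atTop C).and (Ioo_mem_nhdsGT hab)).exists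
  obtain ⟨x, hx, hfx⟩ := intermediate_value_Ioo' hy.2.le
    (hf.mono (Icc_subset_Ioc_iff hy.2.le |>.mpr ⟨hy.1, le_rfl⟩)) ⟨hb, hyC⟩
  have hxab : x ∈ Ioo a b := ⟨hy.1.trans hx.1, hx.2⟩
  refine ⟨x, ⟨hxab, hfx⟩, fun z ⟨hz, hfz⟩ => ?_⟩
  exact hf_anti.injOn (Ioo_subset_Ioc_self hz) (Ioo_subset_Ioc_self hxab) (hfz.trans hfx.symm)

section SubMulLog

variable {c : ℝ}

theorem continuousOn_sub_mul_log : ContinuousOn (fun x => x - c * log x) (Ioi 0) :=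
  continuousOn_id.sub <| continuousOn_const.mul <|
    continuousOn_log.mono fun _ hx => ne_of_gt hx

theorem strictAntiOn_sub_mul_log : StrictAntiOn (fun x => x - c * log x) (Ioc 0 c) := by
  refine strictAntiOn_of_deriv_neg (convex_Ioc 0 c)
    (continuousOn_sub_mul_log.mono Ioc_subset_Ioi_self) fun x hx => ?_
  rw [interior_Ioc] at hx
  have hderiv : HasDerivAt (fun x => x - c * log x) (1 - c * x⁻¹) x :=
    (hasDerivAt_id x).sub ((hasDerivAt_log hx.1.ne').const_mul c)
  rw [hderiv.deriv, sub_neg, ← div_eq_mul_inv, one_lt_div hx.1]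
  exact hx.2

theorem sub_mul_log_le_sub_mul_log (hc : 0 < c) {x : ℝ} (hx : 0 < x) :
    c - c * log c ≤ x - c * log x := by
  have hlog : log (x / c) ≤ x / c - 1 := log_le_sub_one_of_pos (div_pos hx hc)
  rw [log_div hx.ne' hc.ne'] at hlog
  have := mul_le_mul_of_nonneg_left hlog hc.le
  rw [mul_sub, mul_sub, mul_div_cancel₀ x hc.ne', mul_one] at this
  linarith

theorem min_sub_mul_log_le (hc : 0 < c) {x : ℝ} (hx : 0 < x) :
    min x c - c * log (min x c) ≤ x - c * log x := by
  rcases le_total x c with h | h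
  · rw [min_eq_left h]
  · rw [min_eq_right h]
    exact sub_mul_log_le_sub_mul_log hc hx

theorem tendsto_sub_mul_log_nhdsGT_zero (hc : 0 < c) :
    Tendsto (fun x => x - c * log x) (𝓝[>] 0) atTop := by
  have hlog : Tendsto (fun x => -(c * log x)) (𝓝[>] 0) atTop :=
    tendsto_neg_atBot_atTop.comp (tendsto_log_nhdsGT_zero.const_mul_atBot hc)
  simpa only [sub_eq_add_neg, id_eq] using
    (tendsto_id.mono_left nhdsWithin_le_nhds : Tendsto id (𝓝[>] (0 : ℝ)) (𝓝 0)).add_atTop hlog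

end SubMulLog

theorem stmt3_general (β γ S₀ E₀ I₀ : ℝ) (hβ : 0 < β) (hγ : 0 < γ)
    (hS₀ : 0 < S₀) (hE₀ : 0 < E₀) (hI₀ : 0 < I₀) :
    ∃! x : ℝ, x ∈ Set.Ioo 0 (min S₀ (γ / β)) ∧
      x - (γ / β) * Real.log x = S₀ + E₀ + I₀ - (γ / β) * Real.log S₀ := by
  have hc : 0 < γ / β := div_pos hγ hβ
  have hmin : min S₀ (γ / β) - γ / β * log (min S₀ (γ / β))
      < S₀ + E₀ + I₀ - γ / β * log S₀ := by
    linarith [min_sub_mul_log_le hc hS₀]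
  exact StrictAntiOn.existsUnique_mem_Ioo_eq_of_tendsto_atTop (lt_min hS₀ hc)
    (strictAntiOn_sub_mul_log.mono (Ioc_subset_Ioc_right (min_le_right _ _)))
    (continuousOn_sub_mul_log.mono Ioc_subset_Ioi_self)
    (tendsto_sub_mul_log_nhdsGT_zero hc) hmin

theorem stmt3 (β γ S₀ E₀ I₀ : ℝ) (hβ : 0 < β) (hγ : 0 < γ)
    (hS₀ : 0 < S₀) (hE₀ : 0 < E₀) (hI₀ : 0 < I₀)
    (hsum : S₀ + E₀ + I₀ ≤ 1)
    (hcase : S₀ ≤ γ / β ∨ 0 < E₀ + I₀) :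
    ∃! x : ℝ, x ∈ Set.Ioo 0 (min S₀ (γ / β)) ∧
      x - (γ / β) * Real.log x = S₀ + E₀ + I₀ - (γ / β) * Real.log S₀ :=
  stmt3_general β γ S₀ E₀ I₀ hβ hγ hS₀ hE₀ hI₀
end

section
/- Let Ω = Ω₁ ∪ Ω₂ (disjoint), with block contact structure β₂, γ₂ > 0 on Ω₂. If E₂⁰ + I₂⁰ = 0 and β₂S₂⁰/γ₂ > 1, then the scalar equation ln s - (β₂/γ₂)s = ln S₂⁰ - (β₂/γ₂)(S₂⁰ + E₂⁰ + I₂⁰) in the unknown s ∈ (0, S₂⁰] admits exactly two solutions: s = S₂⁰ and a second solution strictly smaller than S₂⁰. -/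
/-! The map `s ↦ log s - c s` (`c > 0`) increases strictly on `(0, c⁻¹]` and decreases strictly on
`[c⁻¹, ∞)`, so it takes each value at most twice on `(0, ∞)`. Its value at `S > c⁻¹` is also taken at
some point of `(0, c⁻¹)`, by the intermediate value theorem between the maximum point `c⁻¹` and
`x₀ = exp (log S - c S)`, whose value `log S - c S - c x₀` lies below the target. -/

open Real Set

namespace Real

lemma hasDerivAt_log_sub_mul (c : ℝ) {x : ℝ} (hx : x ≠ 0) :
    HasDerivAt (fun s => log s - c * s) (x⁻¹ - c) x :=
  ((hasDerivAt_log hx).sub ((hasDerivAt_id' x).const_mul c)).congr_deriv (by rw [mul_one])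

lemma continuousOn_log_sub_mul (c : ℝ) : ContinuousOn (fun s => log s - c * s) (Ioi 0) :=
  fun _ hx => (hasDerivAt_log_sub_mul c (ne_of_gt hx)).continuousAt.continuousWithinAt

variable {c : ℝ}

lemma strictMonoOn_log_sub_mul (hc : 0 < c) :
    StrictMonoOn (fun s => log s - c * s) (Ioc 0 c⁻¹) := by
  refine strictMonoOn_of_deriv_pos (convex_Ioc 0 c⁻¹)
    ((continuousOn_log_sub_mul c).mono Ioc_subset_Ioi_self) fun x hx => ?_
  rw [interior_Ioc] at hx
  rw [(hasDerivAt_log_sub_mul c hx.1.ne').deriv, sub_pos, lt_inv_comm₀ hc hx.1]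
  exact hx.2

lemma strictAntiOn_log_sub_mul (hc : 0 < c) :
    StrictAntiOn (fun s => log s - c * s) (Ici c⁻¹) := by
  refine strictAntiOn_of_deriv_neg (convex_Ici c⁻¹)
    ((continuousOn_log_sub_mul c).mono fun x hx => (inv_pos.2 hc).trans_le hx) fun x hx => ?_
  rw [interior_Ici] at hx
  have hx0 : 0 < x := (inv_pos.2 hc).trans hx
  rw [(hasDerivAt_log_sub_mul c hx0.ne').deriv, sub_neg, inv_lt_comm₀ hx0 hc]
  exact hx

lemma exists_mem_Ioo_log_sub_mul_eq (hc : 0 < c) {S : ℝ} (hS : c⁻¹ < S) :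
    ∃ s ∈ Ioo 0 c⁻¹, log s - c * s = log S - c * S := by
  have hS0 : 0 < S := (inv_pos.2 hc).trans hS
  set x₀ := exp (log S - c * S) with hx₀_def
  have hx₀ : 0 < x₀ := exp_pos _
  have hx₀_lt : x₀ < c⁻¹ := by
    have hcS : c * S < exp (c * S) := by linarith [add_one_le_exp (c * S)]
    have : x₀ = S / exp (c * S) := by rw [hx₀_def, exp_sub, exp_log hS0]
    rw [this, div_lt_iff₀ (exp_pos _), lt_inv_mul_iff₀ hc]
    exact hcS
  have h_left : log x₀ - c * x₀ < log S - c * S := by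
    rw [log_exp]
    linarith [mul_pos hc hx₀]
  have h_right : log S - c * S < log c⁻¹ - c * c⁻¹ :=
    strictAntiOn_log_sub_mul hc self_mem_Ici hS.le hS
  obtain ⟨s, hs, hs_eq⟩ := intermediate_value_Ioo hx₀_lt.le
    ((continuousOn_log_sub_mul c).mono fun x hx => hx₀.trans_le hx.1) ⟨h_left, h_right⟩
  exact ⟨s, ⟨hx₀.trans hs.1, hs.2⟩, hs_eq⟩

lemma eq_or_eq_of_log_sub_mul_eq (hc : 0 < c) {s s' S : ℝ} (hs : 0 < s) (hs' : s' ∈ Ioc 0 c⁻¹)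
    (hS : c⁻¹ ≤ S) (h : log s - c * s = log S - c * S) (h' : log s' - c * s' = log S - c * S) :
    s = s' ∨ s = S := by
  rcases le_total s c⁻¹ with hs_le | hs_ge
  · exact .inl <| (strictMonoOn_log_sub_mul hc).injOn ⟨hs, hs_le⟩ hs' (h.trans h'.symm)
  · exact .inr <| (strictAntiOn_log_sub_mul hc).injOn hs_ge hS h

end Real

theorem stmt12_general (β₂ γ₂ S₂ E₂ I₂ : ℝ) (hβ : 0 < β₂) (hγ : 0 < γ₂)
    (hEI : E₂ + I₂ = 0)
    (hR : 1 < β₂ * S₂ / γ₂) :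
    ∃ s' : ℝ, 0 < s' ∧ s' < S₂ ∧
      (Real.log s' - (β₂ / γ₂) * s'
        = Real.log S₂ - (β₂ / γ₂) * (S₂ + E₂ + I₂)) ∧
      (Real.log S₂ - (β₂ / γ₂) * S₂
        = Real.log S₂ - (β₂ / γ₂) * (S₂ + E₂ + I₂)) ∧
      ∀ s ∈ Set.Ioc (0 : ℝ) S₂,
        Real.log s - (β₂ / γ₂) * s = Real.log S₂ - (β₂ / γ₂) * (S₂ + E₂ + I₂) →
        s = s' ∨ s = S₂ := by
  rw [add_assoc, hEI, add_zero]
  have hc : 0 < β₂ / γ₂ := div_pos hβ hγ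
  have hS : (β₂ / γ₂)⁻¹ < S₂ := by
    rw [inv_lt_iff_one_lt_mul₀ hc, mul_div_assoc', mul_comm S₂ β₂]
    exact hR
  obtain ⟨s', hs', hs'_eq⟩ := exists_mem_Ioo_log_sub_mul_eq hc hS
  exact ⟨s', hs'.1, hs'.2.trans hS, hs'_eq, rfl, fun s hs h =>
    eq_or_eq_of_log_sub_mul_eq hc hs.1 (Ioo_subset_Ioc_self hs') hS.le h hs'_eq⟩

theorem stmt12 (β₂ γ₂ S₂ E₂ I₂ : ℝ) (hβ : 0 < β₂) (hγ : 0 < γ₂) (hS : 0 < S₂)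
    (hE : 0 ≤ E₂) (hI : 0 ≤ I₂) (hEI : E₂ + I₂ = 0)
    (hR : 1 < β₂ * S₂ / γ₂) :
    ∃ s' : ℝ, 0 < s' ∧ s' < S₂ ∧
      (Real.log s' - (β₂ / γ₂) * s'
        = Real.log S₂ - (β₂ / γ₂) * (S₂ + E₂ + I₂)) ∧
      (Real.log S₂ - (β₂ / γ₂) * S₂
        = Real.log S₂ - (β₂ / γ₂) * (S₂ + E₂ + I₂)) ∧
      ∀ s ∈ Set.Ioc (0 : ℝ) S₂,
        Real.log s - (β₂ / γ₂) * s = Real.log S₂ - (β₂ / γ₂) * (S₂ + E₂ + I₂) →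
        s = s' ∨ s = S₂ :=
  stmt12_general β₂ γ₂ S₂ E₂ I₂ hβ hγ hEI hR
end

section
/- Two-group final size non-uniqueness: with constants β₁, β₂, β₁₂, γ₁, γ₂ > 0, initial data S₁⁰, S₂⁰ > 0, E₁⁰ + I₁⁰ > 0, E₂⁰ + I₂⁰ = 0, and β₂S₂⁰/γ₂ > 1, the system ln S₁ - (β₁/γ₁)S₁ - (β₁₂/γ₂)S₂ = ln S₁⁰ - (β₁/γ₁)(S₁⁰+E₁⁰+I₁⁰) - (β₁₂/γ₂)(S₂⁰+E₂⁰+I₂⁰), ln S₂ - (β₂/γ₂)S₂ = ln S₂⁰ - (β₂/γ₂)(S₂⁰+E₂⁰+I₂⁰), admits at least two distinct solutions (S₁, S₂) with 0 < S₁ ≤ S₁⁰ and 0 < S₂ ≤ S₂⁰. -/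
/-!
The second equation involves `S₂` alone. With `k = β₂/γ₂`, `s ↦ log s - k s` is strictly
concave with maximum at `s = 1/k`; the condition `k S₂⁰ > 1` puts `S₂⁰` to the right of the
maximum, so besides the trivial root `S₂ = S₂⁰` there is a second root below `1/k`. For either
root the right-hand side of the first equation is at most `log S₁⁰ - (β₁/γ₁) S₁⁰`, and since
`log s - (β₁/γ₁) s → -∞` as `s → 0⁺`, the intermediate value theorem gives a matching
`S₁ ∈ (0, S₁⁰]`.
-/

open Real Set

namespace LogSubMul

theorem exists_eq_of_le {k s₀ c : ℝ} (hk : 0 ≤ k) (hs₀ : 0 < s₀)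
    (hc : c ≤ log s₀ - k * s₀) :
    ∃ s, 0 < s ∧ s ≤ s₀ ∧ log s - k * s = c := by
  have hexp_le : exp c ≤ s₀ := by
    rw [← exp_log hs₀, exp_le_exp]
    linarith [mul_nonneg hk hs₀.le]
  have hcont : ContinuousOn (fun s => log s - k * s) (Icc (exp c) s₀) :=
    (continuousOn_log.mono fun x hx => (exp_pos c |>.trans_le hx.1).ne').sub
      (continuousOn_const.mul continuousOn_id)
  have hc_mem : c ∈ Icc (log (exp c) - k * exp c) (log s₀ - k * s₀) := by
    refine ⟨?_, hc⟩
    rw [log_exp]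
    linarith [mul_nonneg hk (exp_pos c).le]
  obtain ⟨s, hs, hfs⟩ := intermediate_value_Icc hexp_le hcont hc_mem
  exact ⟨s, (exp_pos c).trans_le hs.1, hs.2, hfs⟩

theorem le_neg_log_sub_one {k s : ℝ} (hk : 0 < k) (hs : 0 < s) :
    log s - k * s ≤ -log k - 1 := by
  have h := log_le_sub_one_of_pos (mul_pos hk hs)
  rw [log_mul hk.ne' hs.ne'] at h
  linarith

theorem exists_lt_eq {k s₀ : ℝ} (hk : 0 < k) (hks₀ : 1 < k * s₀) :
    ∃ s, 0 < s ∧ s < s₀ ∧ log s - k * s = log s₀ - k * s₀ := by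
  have hs₀ : 0 < s₀ := pos_of_mul_pos_right (one_pos.trans hks₀) hk.le
  have hinv_lt : k⁻¹ < s₀ := by
    rwa [inv_lt_iff_one_lt_mul₀' hk]
  have hle_max : log s₀ - k * s₀ ≤ log k⁻¹ - k * k⁻¹ := by
    rw [log_inv, mul_inv_cancel₀ hk.ne']
    exact le_neg_log_sub_one hk hs₀
  obtain ⟨s, hs, hs_le, hfs⟩ := exists_eq_of_le hk.le (inv_pos.mpr hk) hle_max
  exact ⟨s, hs, hs_le.trans_lt hinv_lt, hfs⟩

end LogSubMul

theorem stmt13_general (β₁ β₂ β₁₂ γ₁ γ₂ S₁ S₂ E₁ I₁ E₂ I₂ : ℝ)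
    (hβ₁ : 0 < β₁) (hβ₂ : 0 < β₂) (hβ₁₂ : 0 < β₁₂) (hγ₁ : 0 < γ₁) (hγ₂ : 0 < γ₂)
    (hS₁ : 0 < S₁)
    (hEI₁ : 0 < E₁ + I₁)
    (hEI₂ : E₂ + I₂ = 0)
    (hR : 1 < β₂ * S₂ / γ₂) :
    ∃ a b : ℝ × ℝ, a ≠ b ∧
      (0 < a.1 ∧ a.1 ≤ S₁ ∧ 0 < a.2 ∧ a.2 ≤ S₂ ∧
        Real.log a.1 - (β₁ / γ₁) * a.1 - (β₁₂ / γ₂) * a.2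
          = Real.log S₁ - (β₁ / γ₁) * (S₁ + E₁ + I₁) - (β₁₂ / γ₂) * (S₂ + E₂ + I₂) ∧
        Real.log a.2 - (β₂ / γ₂) * a.2
          = Real.log S₂ - (β₂ / γ₂) * (S₂ + E₂ + I₂)) ∧
      (0 < b.1 ∧ b.1 ≤ S₁ ∧ 0 < b.2 ∧ b.2 ≤ S₂ ∧
        Real.log b.1 - (β₁ / γ₁) * b.1 - (β₁₂ / γ₂) * b.2
          = Real.log S₁ - (β₁ / γ₁) * (S₁ + E₁ + I₁) - (β₁₂ / γ₂) * (S₂ + E₂ + I₂) ∧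
        Real.log b.2 - (β₂ / γ₂) * b.2
          = Real.log S₂ - (β₂ / γ₂) * (S₂ + E₂ + I₂)) := by
  have hk₁ : 0 ≤ β₁ / γ₁ := (div_pos hβ₁ hγ₁).le
  have hm : 0 ≤ β₁₂ / γ₂ := (div_pos hβ₁₂ hγ₂).le
  have hS₂_tot : S₂ + E₂ + I₂ = S₂ := by linarith
  rw [hS₂_tot]
  obtain ⟨s₂, hs₂, hs₂_lt, hs₂_eq⟩ :=
    LogSubMul.exists_lt_eq (div_pos hβ₂ hγ₂) (by rwa [div_mul_eq_mul_div])
  have solve_first : ∀ y ≤ S₂, ∃ x, 0 < x ∧ x ≤ S₁ ∧ Real.log x - (β₁ / γ₁) * x - (β₁₂ / γ₂) * y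
      = Real.log S₁ - (β₁ / γ₁) * (S₁ + E₁ + I₁) - (β₁₂ / γ₂) * S₂ := fun y hy => by
    obtain ⟨x, hx, hx_le, hx_eq⟩ := LogSubMul.exists_eq_of_le hk₁ hS₁
      (c := Real.log S₁ - (β₁ / γ₁) * (S₁ + E₁ + I₁) - (β₁₂ / γ₂) * (S₂ - y))
      (by linarith [mul_nonneg hk₁ hEI₁.le, mul_nonneg hm (sub_nonneg.mpr hy)])
    exact ⟨x, hx, hx_le, by linarith⟩
  obtain ⟨x₁, hx₁, hx₁_le, hx₁_eq⟩ := solve_first S₂ le_rfl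
  obtain ⟨x₂, hx₂, hx₂_le, hx₂_eq⟩ := solve_first s₂ hs₂_lt.le
  refine ⟨(x₁, S₂), (x₂, s₂), fun h => hs₂_lt.ne' (congrArg Prod.snd h),
    ⟨hx₁, hx₁_le, hs₂.trans hs₂_lt, le_rfl, hx₁_eq, rfl⟩,
    ⟨hx₂, hx₂_le, hs₂, hs₂_lt.le, hx₂_eq, hs₂_eq⟩⟩

theorem stmt13 (β₁ β₂ β₁₂ γ₁ γ₂ S₁ S₂ E₁ I₁ E₂ I₂ : ℝ)
    (hβ₁ : 0 < β₁) (hβ₂ : 0 < β₂) (hβ₁₂ : 0 < β₁₂) (hγ₁ : 0 < γ₁) (hγ₂ : 0 < γ₂)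
    (hS₁ : 0 < S₁) (hS₂ : 0 < S₂)
    (hE₁ : 0 ≤ E₁) (hI₁ : 0 ≤ I₁) (hEI₁ : 0 < E₁ + I₁)
    (hE₂ : 0 ≤ E₂) (hI₂ : 0 ≤ I₂) (hEI₂ : E₂ + I₂ = 0)
    (hR : 1 < β₂ * S₂ / γ₂) :
    ∃ a b : ℝ × ℝ, a ≠ b ∧
      (0 < a.1 ∧ a.1 ≤ S₁ ∧ 0 < a.2 ∧ a.2 ≤ S₂ ∧
        Real.log a.1 - (β₁ / γ₁) * a.1 - (β₁₂ / γ₂) * a.2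
          = Real.log S₁ - (β₁ / γ₁) * (S₁ + E₁ + I₁) - (β₁₂ / γ₂) * (S₂ + E₂ + I₂) ∧
        Real.log a.2 - (β₂ / γ₂) * a.2
          = Real.log S₂ - (β₂ / γ₂) * (S₂ + E₂ + I₂)) ∧
      (0 < b.1 ∧ b.1 ≤ S₁ ∧ 0 < b.2 ∧ b.2 ≤ S₂ ∧
        Real.log b.1 - (β₁ / γ₁) * b.1 - (β₁₂ / γ₂) * b.2
          = Real.log S₁ - (β₁ / γ₁) * (S₁ + E₁ + I₁) - (β₁₂ / γ₂) * (S₂ + E₂ + I₂) ∧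
        Real.log b.2 - (β₂ / γ₂) * b.2
          = Real.log S₂ - (β₂ / γ₂) * (S₂ + E₂ + I₂)) :=
  stmt13_general β₁ β₂ β₁₂ γ₁ γ₂ S₁ S₂ E₁ I₁ E₂ I₂ hβ₁ hβ₂ hβ₁₂ hγ₁ hγ₂ hS₁ hEI₁ hEI₂ hR
end

section
/- Monotone iteration for the final size equation: define recursively ln S_{k+1}(x) = ∫_Ω (β(x,y)/γ(y)) S_k(y) dy + A(x), where A(x) = ln S₀(x) - ∫_Ω (β(x,y)/γ(y))[S₀+E₀+I₀](y)dy, starting from S₀ > 0, with E₀ + I₀ ≥ 0, E₀ + I₀ ≢ 0, β > 0, γ > 0. Then the sequence (S_k) is strictly decreasing pointwise: S_{k+1}(x) < S_k(x) for all k ≥ 0 and a.e. x. -/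
/-!
Write `K x y = β x y / γ y`. Unfolding `A`, the first step reads
`S₁ x = S₀ x * exp (-∫ K x y * (E₀ + I₀) y dy)`, so `S₁ < S₀` wherever that integral is positive.
Afterwards `ln S_{k+1} x - ln S_k x = ∫ K x y * (S_k - S_{k-1}) y dy`, and since `K > 0`, an almost
everywhere strict decrease of `S_k` makes this integral negative at every `x`.
-/

open MeasureTheory Function Real

theorem integral_lt_integral_of_ae_lt {Ω : Type*} [MeasurableSpace Ω] {μ : Measure Ω}
    (hμ : μ ≠ 0) {f g : Ω → ℝ} (hf : Integrable f μ) (hg : Integrable g μ)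
    (hfg : ∀ᵐ x ∂μ, f x < g x) : ∫ x, f x ∂μ < ∫ x, g x ∂μ := by
  rw [← sub_pos, ← integral_sub hg hf,
    integral_pos_iff_support_of_nonneg_ae (hfg.mono fun x hx => (sub_pos.2 hx).le) (hg.sub hf),
    pos_iff_ne_zero, Ne, measure_eq_zero_iff_ae_notMem]
  intro hzero
  have : (ae μ).NeBot := ae_neBot.2 hμ
  obtain ⟨x, hx, hlt⟩ := (hzero.and hfg).exists
  exact hx (sub_pos.2 hlt).ne'

section KernelOperator

variable {α Ω : Type*} [MeasurableSpace α] [MeasurableSpace Ω] {μ : Measure Ω}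
  {K : α → Ω → ℝ}

theorem Measurable.integral_kernel_mul [SFinite μ] (hK : Measurable (uncurry K)) {g : Ω → ℝ}
    (hg : Measurable g) : Measurable fun x => ∫ y, K x y * g y ∂μ :=
  (StronglyMeasurable.integral_prod_right' (f := fun p : α × Ω => K p.1 p.2 * g p.2)
    (hK.mul (hg.comp measurable_snd)).stronglyMeasurable).measurable

theorem integrable_kernel_mul (hK : Measurable (uncurry K)) {C : ℝ} (hKb : ∀ x y, ‖K x y‖ ≤ C)
    {g : Ω → ℝ} (hg : Integrable g μ) (x : α) : Integrable (fun y => K x y * g y) μ :=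
  hg.bdd_mul (hK.comp measurable_prodMk_left).aestronglyMeasurable (.of_forall (hKb x))

theorem integral_kernel_mul_lt (hμ : μ ≠ 0) (hK : Measurable (uncurry K))
    (hKpos : ∀ x y, 0 < K x y) {C : ℝ} (hKb : ∀ x y, ‖K x y‖ ≤ C) {f g : Ω → ℝ}
    (hf : Integrable f μ) (hg : Integrable g μ) (hfg : ∀ᵐ y ∂μ, f y < g y) (x : α) :
    ∫ y, K x y * f y ∂μ < ∫ y, K x y * g y ∂μ :=
  integral_lt_integral_of_ae_lt hμ (integrable_kernel_mul hK hKb hf x)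
    (integrable_kernel_mul hK hKb hg x) (hfg.mono fun y hy => mul_lt_mul_of_pos_left hy (hKpos x y))

end KernelOperator

theorem ae_succ_lt_of_exp_kernel_recursion {Ω : Type*} [MeasurableSpace Ω] {μ : Measure Ω}
    [SFinite μ] {K : Ω → Ω → ℝ} (hK : Measurable (uncurry K)) (hKpos : ∀ x y, 0 < K x y)
    {C : ℝ} (hKb : ∀ x y, ‖K x y‖ ≤ C) {A : Ω → ℝ} (hA : Measurable A) {S : ℕ → Ω → ℝ}
    (hrec : ∀ k x, S (k + 1) x = exp (∫ y, K x y * S k y ∂μ + A x))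
    (hS₀m : Measurable (S 0)) (hS₀i : Integrable (S 0) μ) (hS₁ : ∀ᵐ x ∂μ, S 1 x < S 0 x) :
    ∀ k, ∀ᵐ x ∂μ, S (k + 1) x < S k x := by
  rcases eq_or_ne μ 0 with rfl | hμ
  · simp
  have hSm : ∀ k, Measurable (S k) := by
    intro k
    induction k with
    | zero => exact hS₀m
    | succ k ih =>
      rw [funext (hrec k)]
      exact ((hK.integral_kernel_mul ih).add hA).exp
  suffices ∀ k, Integrable (S k) μ ∧ ∀ᵐ x ∂μ, S (k + 1) x < S k x from fun k => (this k).2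
  intro k
  induction k with
  | zero => exact ⟨hS₀i, hS₁⟩
  | succ k ih =>
    obtain ⟨hint, hlt⟩ := ih
    have hint' : Integrable (S (k + 1)) μ := hint.mono' (hSm (k + 1)).aestronglyMeasurable <|
      hlt.mono fun x hx => by
        rw [norm_of_nonneg (hrec k x ▸ (exp_pos _).le)]
        exact hx.le
    refine ⟨hint', .of_forall fun x => ?_⟩
    rw [hrec (k + 1) x, hrec k x, exp_lt_exp]
    exact add_lt_add_left (integral_kernel_mul_lt hμ hK hKpos hKb hint' hint hlt x) _

theorem stmt14_general {Ω : Type*} [MeasurableSpace Ω] (μ : Measure Ω) [IsFiniteMeasure μ]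
    (β : Ω → Ω → ℝ) (γ S₀ E₀ I₀ A : Ω → ℝ) (cγ Cβ CS : ℝ)
    (hβm : Measurable (Function.uncurry β)) (hβpos : ∀ x y, 0 < β x y)
    (hβb : ∀ x y, β x y ≤ Cβ)
    (hcγ : 0 < cγ) (hγ : ∀ y, cγ ≤ γ y) (hγm : Measurable γ)
    (hSm : Measurable S₀) (hEm : Measurable E₀) (hIm : Measurable I₀)
    (hS₀pos : ∀ x, 0 < S₀ x) (hS₀b : ∀ x, S₀ x ≤ CS)
    (hEI : ∀ᵐ x ∂μ, 0 < ∫ y, (β x y / γ y) * (E₀ y + I₀ y) ∂μ)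
    (hA : ∀ x, A x = Real.log (S₀ x) - ∫ y, (β x y / γ y) * (S₀ y + E₀ y + I₀ y) ∂μ)
    (Sk : ℕ → Ω → ℝ) (hSk0 : Sk 0 = S₀)
    (hrec : ∀ k x, Sk (k + 1) x = Real.exp ((∫ y, (β x y / γ y) * Sk k y ∂μ) + A x)) :
    ∀ k : ℕ, ∀ᵐ x ∂μ, Sk (k + 1) x < Sk k x := by
  have hK : Measurable (uncurry fun x y => β x y / γ y) := hβm.div (hγm.comp measurable_snd)
  have hKpos : ∀ x y, 0 < β x y / γ y := fun x y => div_pos (hβpos x y) (hcγ.trans_le (hγ y))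
  have hKb : ∀ x y, ‖β x y / γ y‖ ≤ Cβ / cγ := fun x y => by
    rw [norm_of_nonneg (hKpos x y).le]
    exact div_le_div₀ ((hβpos x y).le.trans (hβb x y)) (hβb x y) hcγ (hγ y)
  have hAm : Measurable A := by
    rw [funext hA]
    exact hSm.log.sub (hK.integral_kernel_mul ((hSm.add hEm).add hIm))
  have hS₀i : Integrable S₀ μ := .of_bound hSm.aestronglyMeasurable CS <|
    .of_forall fun x => (norm_of_nonneg (hS₀pos x).le).trans_le (hS₀b x)
  refine ae_succ_lt_of_exp_kernel_recursion hK hKpos hKb hAm hrec (hSk0 ▸ hSm) (hSk0 ▸ hS₀i) ?_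
  filter_upwards [hEI] with x hEIx
  have hsplit : ∫ y, β x y / γ y * (S₀ y + E₀ y + I₀ y) ∂μ =
      ∫ y, β x y / γ y * S₀ y ∂μ + ∫ y, β x y / γ y * (E₀ y + I₀ y) ∂μ := by
    rw [← integral_add (integrable_kernel_mul hK hKb hS₀i x) (.of_integral_ne_zero hEIx.ne')]
    simp only [mul_add, add_assoc]
  rw [hrec 0 x, hSk0, hA x, hsplit]
  refine (exp_lt_exp.2 ?_).trans_eq (exp_log (hS₀pos x))
  linarith

theorem stmt14 {Ω : Type*} [MeasurableSpace Ω] (μ : Measure Ω) [IsFiniteMeasure μ]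
    (hμ : μ ≠ 0)
    (β : Ω → Ω → ℝ) (γ S₀ E₀ I₀ A : Ω → ℝ) (cγ Cβ CS : ℝ)
    (hβm : Measurable (Function.uncurry β)) (hβpos : ∀ x y, 0 < β x y)
    (hβb : ∀ x y, β x y ≤ Cβ)
    (hcγ : 0 < cγ) (hγ : ∀ y, cγ ≤ γ y) (hγm : Measurable γ)
    (hSm : Measurable S₀) (hEm : Measurable E₀) (hIm : Measurable I₀)
    (hS₀pos : ∀ x, 0 < S₀ x) (hS₀b : ∀ x, S₀ x ≤ CS)
    (hE₀nn : ∀ x, 0 ≤ E₀ x) (hI₀nn : ∀ x, 0 ≤ I₀ x)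
    (hE₀b : ∃ C, ∀ x, E₀ x ≤ C) (hI₀b : ∃ C, ∀ x, I₀ x ≤ C)
    (hEI : ∀ᵐ x ∂μ, 0 < ∫ y, (β x y / γ y) * (E₀ y + I₀ y) ∂μ)
    (hA : ∀ x, A x = Real.log (S₀ x) - ∫ y, (β x y / γ y) * (S₀ y + E₀ y + I₀ y) ∂μ)
    (Sk : ℕ → Ω → ℝ) (hSk0 : Sk 0 = S₀)
    (hrec : ∀ k x, Sk (k + 1) x = Real.exp ((∫ y, (β x y / γ y) * Sk k y ∂μ) + A x)) :
    ∀ k : ℕ, ∀ᵐ x ∂μ, Sk (k + 1) x < Sk k x :=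
  stmt14_general μ β γ S₀ E₀ I₀ A cγ Cβ CS hβm hβpos hβb hcγ hγ hγm hSm hEm hIm hS₀pos hS₀b hEI hA
    Sk hSk0 hrec
end

section
/- Contraction estimate: let T ≥ 0 be such that r := the spectral radius of K_{S(T,·)} satisfies r < 1, let ψ be a positive eigenfunction of the adjoint K*_{S(T,·)} with eigenvalue r, and define F(u)(x) = ∫_Ω (β(x,y)/γ(y)) S(T,y) exp(u(y) - Φ(T,y)) dy on the set 𝒦 = {u ∈ L¹ : 0 ≤ u ≤ Φ(T,·)}, where Φ(T,x) = ∫(β(x,y)/γ(y))[S+E+I](T,y)dy. Then for all u, v ∈ 𝒦, ‖F(u) - F(v)‖_T ≤ r‖u - v‖_T, where ‖u‖_T = ∫_Ω ψ(x)S(T,x)|u(x)|dx. In particular F has at most one fixed point in 𝒦. -/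
open MeasureTheory

/-!
Since `exp` is 1-Lipschitz on `(-∞, 0]`, `|F u - F v| ≤ K |u - v|` pointwise, where `K` is the
integral operator with the nonnegative kernel `β x y / γ y * S y`. Integrating against `ψ S` and
exchanging the order of integration moves `K` onto the weight, and the eigen relation
`K* ψ = r ψ` gives `(ψ S) K = r ψ S`; hence `‖F u - F v‖_T ≤ r ‖u - v‖_T`. For two fixed
points this reads `d ≤ r d` with `r < 1`, so `d = 0`, and `ψ S > 0` a.e. forces `u = v` a.e.
-/

theorem Real.abs_exp_sub_exp_le_of_nonpos {a b : ℝ} (ha : a ≤ 0) (hb : b ≤ 0) :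
    |Real.exp a - Real.exp b| ≤ |a - b| := by
  wlog hba : b ≤ a generalizing a b
  · rw [abs_sub_comm, abs_sub_comm a]
    exact this hb ha (le_of_not_ge hba)
  have hsplit : Real.exp a - Real.exp b = Real.exp a * (1 - Real.exp (b - a)) := by
    rw [mul_sub, ← Real.exp_add]; ring_nf
  rw [abs_of_nonneg (sub_nonneg.2 (Real.exp_le_exp.2 hba)), abs_of_nonneg (sub_nonneg.2 hba),
    hsplit]
  calc Real.exp a * (1 - Real.exp (b - a)) ≤ 1 * (a - b) :=
        mul_le_mul (Real.exp_le_one_iff.2 ha) (by linarith [Real.add_one_le_exp (b - a)])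
          (by linarith [Real.exp_le_one_iff.2 (sub_nonpos.2 hba)]) zero_le_one
    _ = a - b := one_mul _

section Kernel

variable {Ω : Type*} [MeasurableSpace Ω] {μ : Measure Ω}

theorem abs_integral_mul_exp_sub_le {k Φ u v : Ω → ℝ} (hk : ∀ᵐ y ∂μ, 0 ≤ k y)
    (hu : ∀ᵐ y ∂μ, u y ≤ Φ y) (hv : ∀ᵐ y ∂μ, v y ≤ Φ y)
    (hiu : Integrable (fun y => k y * Real.exp (u y - Φ y)) μ)
    (hiv : Integrable (fun y => k y * Real.exp (v y - Φ y)) μ)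
    (hi : Integrable (fun y => k y * |u y - v y|) μ) :
    |∫ y, k y * Real.exp (u y - Φ y) ∂μ - ∫ y, k y * Real.exp (v y - Φ y) ∂μ|
      ≤ ∫ y, k y * |u y - v y| ∂μ := by
  rw [← integral_sub hiu hiv]
  refine abs_integral_le_integral_abs.trans (integral_mono_ae (hiu.sub hiv).abs hi ?_)
  filter_upwards [hk, hu, hv] with y hky huy hvy
  rw [← mul_sub, abs_mul, abs_of_nonneg hky]
  refine mul_le_mul_of_nonneg_left ?_ hky
  simpa using Real.abs_exp_sub_exp_le_of_nonpos (sub_nonpos.2 huy) (sub_nonpos.2 hvy)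

theorem integral_mul_le_of_adjoint_eigen [SFinite μ] {k : Ω → Ω → ℝ} {w φ g G : Ω → ℝ}
    {C r : ℝ} (hk : AEStronglyMeasurable (Function.uncurry k) (μ.prod μ))
    (hkC : ∀ x y, ‖k x y‖ ≤ C) (hw : Integrable w μ) (hg : Integrable g μ)
    (hw0 : ∀ᵐ x ∂μ, 0 ≤ w x) (hG0 : ∀ᵐ x ∂μ, 0 ≤ G x)
    (hG : ∀ᵐ x ∂μ, G x ≤ ∫ y, k x y * g y ∂μ)
    (heig : ∀ᵐ y ∂μ, ∫ x, k x y * w x ∂μ = r * φ y) :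
    ∫ x, w x * G x ∂μ ≤ r * ∫ y, φ y * g y ∂μ := by
  have hint : Integrable (Function.uncurry fun x y => k x y * (w x * g y)) (μ.prod μ) :=
    (hw.mul_prod hg).bdd_mul hk (ae_of_all _ fun z => hkC z.1 z.2)
  calc ∫ x, w x * G x ∂μ ≤ ∫ x, ∫ y, k x y * (w x * g y) ∂μ ∂μ := by
        refine integral_mono_of_nonneg ?_ hint.integral_prod_left ?_
        · filter_upwards [hw0, hG0] with x hwx hGx using mul_nonneg hwx hGx
        filter_upwards [hw0, hG] with x hwx hGx
        calc w x * G x ≤ w x * ∫ y, k x y * g y ∂μ := mul_le_mul_of_nonneg_left hGx hwx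
          _ = ∫ y, k x y * (w x * g y) ∂μ := by
            rw [← integral_const_mul]; congr 1; ext y; ring
    _ = ∫ y, ∫ x, k x y * (w x * g y) ∂μ ∂μ := integral_integral_swap hint
    _ = ∫ y, r * (φ y * g y) ∂μ := by
        refine integral_congr_ae (heig.mono fun y hy => ?_)
        simp only [← mul_assoc, integral_mul_const, hy]
    _ = r * ∫ y, φ y * g y ∂μ := integral_const_mul r _

theorem ae_eq_of_integral_mul_abs_sub_le {ρ u v : Ω → ℝ} {r : ℝ} (hρ : ∀ᵐ x ∂μ, 0 < ρ x)
    (hi : Integrable (fun x => ρ x * |u x - v x|) μ) (hr : r < 1)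
    (hle : ∫ x, ρ x * |u x - v x| ∂μ ≤ r * ∫ x, ρ x * |u x - v x| ∂μ) : u =ᵐ[μ] v := by
  have hnonneg : 0 ≤ᵐ[μ] fun x => ρ x * |u x - v x| :=
    hρ.mono fun x hx => mul_nonneg hx.le (abs_nonneg _)
  have hzero : ∫ x, ρ x * |u x - v x| ∂μ = 0 := by
    nlinarith [integral_nonneg_of_ae hnonneg]
  filter_upwards [(integral_eq_zero_iff_of_nonneg_ae hnonneg hi).1 hzero, hρ] with x hx hρx
  simpa [hρx.ne', sub_eq_zero] using hx

theorem integral_mul_abs_integral_mul_exp_sub_le [IsFiniteMeasure μ] {k : Ω → Ω → ℝ}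
    {w φ Φ u v : Ω → ℝ} {C r : ℝ} (hk : Measurable (Function.uncurry k))
    (hk0 : ∀ x y, 0 ≤ k x y) (hkC : ∀ x y, k x y ≤ C)
    (hw : Integrable w μ) (hw0 : ∀ᵐ x ∂μ, 0 ≤ w x)
    (hu : Measurable u) (hv : Measurable v) (hΦ : Measurable Φ)
    (huΦ : ∀ᵐ y ∂μ, u y ≤ Φ y) (hvΦ : ∀ᵐ y ∂μ, v y ≤ Φ y)
    (huv : Integrable (fun y => |u y - v y|) μ)
    (heig : ∀ᵐ y ∂μ, ∫ x, k x y * w x ∂μ = r * φ y) :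
    ∫ x, w x * |∫ y, k x y * Real.exp (u y - Φ y) ∂μ - ∫ y, k x y * Real.exp (v y - Φ y) ∂μ| ∂μ
      ≤ r * ∫ y, φ y * |u y - v y| ∂μ := by
  have hk_norm : ∀ x y, ‖k x y‖ ≤ C := fun x y => by rw [Real.norm_of_nonneg (hk0 x y)]; exact hkC x y
  have hrow : ∀ x, AEStronglyMeasurable (k x) μ := fun x =>
    (hk.comp measurable_prodMk_left).aestronglyMeasurable
  have hexp : ∀ x {f : Ω → ℝ}, Measurable f → (∀ᵐ y ∂μ, f y ≤ Φ y) →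
      Integrable (fun y => k x y * Real.exp (f y - Φ y)) μ := fun x f hf hfΦ =>
    (Integrable.of_bound (by fun_prop) 1 (hfΦ.mono fun y hy => by
      simpa [Real.norm_of_nonneg (Real.exp_nonneg _)] using sub_nonpos.2 hy)).bdd_mul
      (hrow x) (ae_of_all _ (hk_norm x))
  refine integral_mul_le_of_adjoint_eigen hk.aestronglyMeasurable hk_norm hw huv hw0
    (ae_of_all _ fun _ => abs_nonneg _) (ae_of_all _ fun x => ?_) heig
  exact abs_integral_mul_exp_sub_le (ae_of_all _ (hk0 x)) huΦ hvΦ (hexp x hu huΦ) (hexp x hv hvΦ)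
    (huv.bdd_mul (hrow x) (ae_of_all _ (hk_norm x)))

theorem integrable_abs_sub_of_ae_mem_Icc [IsFiniteMeasure μ] {Φ u v : Ω → ℝ} {C : ℝ}
    (hu : Measurable u) (hv : Measurable v) (hΦC : ∀ x, Φ x ≤ C)
    (hau : ∀ᵐ x ∂μ, 0 ≤ u x ∧ u x ≤ Φ x) (hav : ∀ᵐ x ∂μ, 0 ≤ v x ∧ v x ≤ Φ x) :
    Integrable (fun x => |u x - v x|) μ :=
  .of_bound (by fun_prop) C (by
    filter_upwards [hau, hav] with x hux hvx
    simpa using abs_sub_le_of_nonneg_of_le hux.1 (hux.2.trans (hΦC x)) hvx.1 (hvx.2.trans (hΦC x)))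

end Kernel

theorem stmt16_general {Ω : Type*} [MeasurableSpace Ω] (μ : Measure Ω) [IsFiniteMeasure μ]
    (β : Ω → Ω → ℝ) (γ ST PhiT ψ : Ω → ℝ) (cγ Cβ CS CΦ Cψ r : ℝ)
    (hβm : Measurable (Function.uncurry β)) (hβpos : ∀ x y, 0 < β x y)
    (hβb : ∀ x y, β x y ≤ Cβ)
    (hcγ : 0 < cγ) (hγ : ∀ y, cγ ≤ γ y) (hγm : Measurable γ)
    (hSTm : Measurable ST) (hSTnn : ∀ x, 0 ≤ ST x)
    (hSTpos : ∀ᵐ x ∂μ, 0 < ST x) (hSTb : ∀ x, ST x ≤ CS)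
    (hΦm : Measurable PhiT) (hΦb : ∀ x, PhiT x ≤ CΦ)
    (hψm : Measurable ψ) (hψpos : ∀ x, 0 < ψ x) (hψb : ∀ x, ψ x ≤ Cψ)
    (hr : r < 1)
    (heig : ∀ᵐ y ∂μ, (1 / γ y) * ∫ x, β x y * ST x * ψ x ∂μ = r * ψ y)
    (F : (Ω → ℝ) → Ω → ℝ)
    (hF : ∀ u x, F u x = ∫ y, (β x y / γ y) * ST y * Real.exp (u y - PhiT y) ∂μ) :
    (∀ u v : Ω → ℝ, Measurable u → Measurable v →
      (∀ᵐ x ∂μ, 0 ≤ u x ∧ u x ≤ PhiT x) →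
      (∀ᵐ x ∂μ, 0 ≤ v x ∧ v x ≤ PhiT x) →
      (∫ x, ψ x * ST x * |F u x - F v x| ∂μ)
        ≤ r * ∫ x, ψ x * ST x * |u x - v x| ∂μ) ∧
    (∀ u v : Ω → ℝ, Measurable u → Measurable v →
      (∀ᵐ x ∂μ, 0 ≤ u x ∧ u x ≤ PhiT x) →
      (∀ᵐ x ∂μ, 0 ≤ v x ∧ v x ≤ PhiT x) →
      (∀ᵐ x ∂μ, F u x = u x) → (∀ᵐ x ∂μ, F v x = v x) →
      u =ᵐ[μ] v) := by
  have hk0 : ∀ x y, 0 ≤ β x y / γ y * ST y := fun x y =>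
    mul_nonneg (div_nonneg (hβpos x y).le (hcγ.trans_le (hγ y)).le) (hSTnn y)
  have hkC : ∀ x y, β x y / γ y * ST y ≤ Cβ / cγ * CS := fun x y =>
    have hCβ : 0 ≤ Cβ := (hβpos x y).le.trans (hβb x y)
    mul_le_mul (div_le_div₀ hCβ (hβb x y) hcγ (hγ y)) (hSTb y) (hSTnn y) (div_nonneg hCβ hcγ.le)
  have hkm : Measurable (Function.uncurry fun x y => β x y / γ y * ST y) :=
    (hβm.div (hγm.comp measurable_snd)).mul (hSTm.comp measurable_snd)
  have hwC : ∀ x, ‖ψ x * ST x‖ ≤ Cψ * CS := fun x => by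
    rw [Real.norm_of_nonneg (mul_nonneg (hψpos x).le (hSTnn x))]
    exact mul_le_mul (hψb x) (hSTb x) (hSTnn x) ((hψpos x).le.trans (hψb x))
  have hw : Integrable (fun x => ψ x * ST x) μ := .of_bound (by fun_prop) _ (ae_of_all _ hwC)
  have heig' : ∀ᵐ y ∂μ, ∫ x, β x y / γ y * ST y * (ψ x * ST x) ∂μ = r * (ψ y * ST y) := by
    filter_upwards [heig] with y hy
    rw [← mul_assoc, ← hy, ← integral_const_mul, ← integral_mul_const]
    congr 1; ext x; ring
  have hcontr : ∀ u v : Ω → ℝ, Measurable u → Measurable v →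
      (∀ᵐ x ∂μ, 0 ≤ u x ∧ u x ≤ PhiT x) → (∀ᵐ x ∂μ, 0 ≤ v x ∧ v x ≤ PhiT x) →
      ∫ x, ψ x * ST x * |F u x - F v x| ∂μ ≤ r * ∫ x, ψ x * ST x * |u x - v x| ∂μ :=
    fun u v hu hv hau hav => by
      simpa only [hF] using integral_mul_abs_integral_mul_exp_sub_le hkm hk0 hkC hw
        (ae_of_all _ fun x => mul_nonneg (hψpos x).le (hSTnn x)) hu hv hΦm
        (hau.mono fun _ h => h.2) (hav.mono fun _ h => h.2)
        (integrable_abs_sub_of_ae_mem_Icc hu hv hΦb hau hav) heig'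
  refine ⟨hcontr, fun u v hu hv hau hav hFu hFv => ?_⟩
  refine ae_eq_of_integral_mul_abs_sub_le (ρ := fun x => ψ x * ST x)
    (hSTpos.mono fun x hx => mul_pos (hψpos x) hx)
    ((integrable_abs_sub_of_ae_mem_Icc hu hv hΦb hau hav).bdd_mul (by fun_prop)
      (ae_of_all _ hwC)) hr ?_
  calc ∫ x, ψ x * ST x * |u x - v x| ∂μ = ∫ x, ψ x * ST x * |F u x - F v x| ∂μ :=
        integral_congr_ae (by filter_upwards [hFu, hFv] with x hux hvx; rw [hux, hvx])
    _ ≤ r * ∫ x, ψ x * ST x * |u x - v x| ∂μ := hcontr u v hu hv hau hav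

theorem stmt16 {Ω : Type*} [MeasurableSpace Ω] (μ : Measure Ω) [IsFiniteMeasure μ]
    (β : Ω → Ω → ℝ) (γ ST PhiT ψ : Ω → ℝ) (cγ Cβ CS CΦ Cψ r : ℝ)
    (hβm : Measurable (Function.uncurry β)) (hβpos : ∀ x y, 0 < β x y)
    (hβb : ∀ x y, β x y ≤ Cβ)
    (hcγ : 0 < cγ) (hγ : ∀ y, cγ ≤ γ y) (hγm : Measurable γ)
    (hSTm : Measurable ST) (hSTnn : ∀ x, 0 ≤ ST x)
    (hSTpos : ∀ᵐ x ∂μ, 0 < ST x) (hSTb : ∀ x, ST x ≤ CS)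
    (hΦm : Measurable PhiT) (hΦnn : ∀ x, 0 ≤ PhiT x) (hΦb : ∀ x, PhiT x ≤ CΦ)
    (hψm : Measurable ψ) (hψpos : ∀ x, 0 < ψ x) (hψb : ∀ x, ψ x ≤ Cψ)
    (hr : r < 1)
    (heig : ∀ᵐ y ∂μ, (1 / γ y) * ∫ x, β x y * ST x * ψ x ∂μ = r * ψ y)
    (F : (Ω → ℝ) → Ω → ℝ)
    (hF : ∀ u x, F u x = ∫ y, (β x y / γ y) * ST y * Real.exp (u y - PhiT y) ∂μ) :
    (∀ u v : Ω → ℝ, Measurable u → Measurable v →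
      (∀ᵐ x ∂μ, 0 ≤ u x ∧ u x ≤ PhiT x) →
      (∀ᵐ x ∂μ, 0 ≤ v x ∧ v x ≤ PhiT x) →
      (∫ x, ψ x * ST x * |F u x - F v x| ∂μ)
        ≤ r * ∫ x, ψ x * ST x * |u x - v x| ∂μ) ∧
    (∀ u v : Ω → ℝ, Measurable u → Measurable v →
      (∀ᵐ x ∂μ, 0 ≤ u x ∧ u x ≤ PhiT x) →
      (∀ᵐ x ∂μ, 0 ≤ v x ∧ v x ≤ PhiT x) →
      (∀ᵐ x ∂μ, F u x = u x) → (∀ᵐ x ∂μ, F v x = v x) →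
      u =ᵐ[μ] v) :=
  stmt16_general μ β γ ST PhiT ψ cγ Cβ CS CΦ Cψ r hβm hβpos hβb hcγ hγ hγm hSTm hSTnn hSTpos hSTb
    hΦm hΦb hψm hψpos hψb hr heig F hF
end
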